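/- arXiv:2105.02382 — 2 statements merged into one kernel-verified Lean document; each statement's English description precedes it below -/
import Mathlib

section
/- Let f : ℝⁿ → ℝ be symmetric and strictly concave on the probability simplex Ωₙ (f(λx + (1−λ)y) > λf(x) + (1−λ)f(y) for all x ≠ y in Ωₙ and 0 < λ < 1). Let ρ be an n×n density matrix and {(p_k, ψ_k)} a pure state decomposition of ρ whose average coherence attains the upper bound, i.e. Σ_k p_k f(|ψ_k(0)|², …, |ψ_k(n−1)|²) = f(ρ₀₀, …, ρ_{n−1,n−1}). Then for every k with p_k > 0 one has |ψ_k(i)|² = ρ_ii for all i. (Necessity of the equality condition in Theorem 1 under strict concavity.) -/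
open Matrix BigOperators
open scoped ComplexOrder

noncomputable section

/-- A symmetric function: invariant under all coordinate permutations. -/
def SymmetricFn {n : ℕ} (f : (Fin n → ℝ) → ℝ) : Prop :=
  ∀ (σ : Equiv.Perm (Fin n)) (x : Fin n → ℝ), f (x ∘ σ) = f x

/-- A density matrix: positive semidefinite with trace one. -/
def IsDensityMatrix {n : ℕ} (ρ : Matrix (Fin n) (Fin n) ℂ) : Prop :=
  ρ.PosSemidef ∧ ρ.trace = 1

/-- The rank-one projection `ψ ψ*` associated to a vector `ψ ∈ ℂⁿ`. -/
def outer {n : ℕ} (ψ : Fin n → ℂ) : Matrix (Fin n) (Fin n) ℂ :=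
  Matrix.vecMulVec ψ (fun i => starRingEnd ℂ (ψ i))

/-- `(p, ψ)` is a pure state decomposition of `ρ`. -/
def IsDecomposition {n m : ℕ} (ρ : Matrix (Fin n) (Fin n) ℂ)
    (p : Fin m → ℝ) (ψ : Fin m → Fin n → ℂ) : Prop :=
  (∀ k, 0 ≤ p k) ∧ (∑ k, p k = 1) ∧ (∀ k, ∑ i, ‖ψ k i‖ ^ 2 = 1) ∧
    ρ = ∑ k, (p k : ℂ) • outer (ψ k)

/-- The coherence vector `(|ψ₀|², …, |ψ_{n-1}|²)` of a vector `ψ`. -/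
def cohVec {n : ℕ} (ψ : Fin n → ℂ) : Fin n → ℝ := fun i => ‖ψ i‖ ^ 2

/-- The average coherence of a pure state decomposition with respect to `f`. -/
def avgCoh {n m : ℕ} (f : (Fin n → ℝ) → ℝ) (p : Fin m → ℝ)
    (ψ : Fin m → Fin n → ℂ) : ℝ :=
  ∑ k, p k * f (cohVec (ψ k))

/-! The diagonal of `ρ` is the `p`-weighted average of the coherence vectors `cohVec (ψ k)`,
which lie in the simplex. The hypothesis is thus the equality case of Jensen's inequality for
`f`, and strict concavity forces every coherence vector of positive weight to equal the
average. -/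

theorem outer_apply_self {n : ℕ} (ψ : Fin n → ℂ) (i : Fin n) :
    outer ψ i i = ((‖ψ i‖ ^ 2 : ℝ) : ℂ) := by
  rw [outer, vecMulVec_apply, Complex.mul_conj']
  push_cast
  rfl

theorem diag_re_sum_smul_outer {n m : ℕ} (p : Fin m → ℝ) (ψ : Fin m → Fin n → ℂ) :
    (fun i => ((∑ k, (p k : ℂ) • outer (ψ k)) i i).re) = ∑ k, p k • cohVec (ψ k) := by
  ext i
  simp [Matrix.sum_apply, outer_apply_self, cohVec, Complex.re_sum, -Complex.ofReal_pow]

theorem cohVec_mem_stdSimplex {n : ℕ} {ψ : Fin n → ℂ} (hψ : ∑ i, ‖ψ i‖ ^ 2 = 1) :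
    cohVec ψ ∈ stdSimplex ℝ (Fin n) :=
  ⟨fun _ => sq_nonneg _, hψ⟩

theorem same_diag_of_avg_coherence_eq_f_diag_general {n : ℕ}
    (f : (Fin n → ℝ) → ℝ)
    (hconc : StrictConcaveOn ℝ (stdSimplex ℝ (Fin n)) f)
    (ρ : Matrix (Fin n) (Fin n) ℂ)
    {m : ℕ} (p : Fin m → ℝ) (ψ : Fin m → Fin n → ℂ)
    (hdec : IsDecomposition ρ p ψ)
    (heq : avgCoh f p ψ = f (fun i => (ρ i i).re)) :
    ∀ k, 0 < p k → ∀ i, ‖ψ k i‖ ^ 2 = (ρ i i).re := by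
  obtain ⟨hp0, hp1, hψ1, rfl⟩ := hdec
  intro k hk i
  rw [diag_re_sum_smul_outer] at heq
  have hjensen := (hconc.map_sum_eq_iff' (fun k _ => hp0 k) hp1
    fun k _ => cohVec_mem_stdSimplex (hψ1 k)).mp heq.symm k (Finset.mem_univ k) hk.ne'
  exact (congrFun hjensen i).trans (congrFun (diag_re_sum_smul_outer p ψ) i).symm

/-- Necessity of the equality condition in Theorem 1 under strict concavity:
if the average coherence of a decomposition attains the upper bound
`f(ρ₀₀, …, ρ_{n-1,n-1})` for a symmetric, strictly concave `f`, then every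
pure state occurring with positive weight has the same diagonal as `ρ`. -/
theorem same_diag_of_avg_coherence_eq_f_diag {n : ℕ}
    (f : (Fin n → ℝ) → ℝ) (hsym : SymmetricFn f)
    (hconc : StrictConcaveOn ℝ (stdSimplex ℝ (Fin n)) f)
    (ρ : Matrix (Fin n) (Fin n) ℂ) (hρ : IsDensityMatrix ρ)
    {m : ℕ} (p : Fin m → ℝ) (ψ : Fin m → Fin n → ℂ)
    (hdec : IsDecomposition ρ p ψ)
    (heq : avgCoh f p ψ = f (fun i => (ρ i i).re)) :
    ∀ k, 0 < p k → ∀ i, ‖ψ k i‖ ^ 2 = (ρ i i).re :=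
  same_diag_of_avg_coherence_eq_f_diag_general f hconc ρ p ψ hdec heq
end
end

section
/- Let 0 ≤ n < 1 and 0 ≤ θ ≤ π/2, set θ_o = arccos(n cosθ), θ₄ = arccos[(1 + 2n cosθ + n² cos 2θ)/(1 + n² + 2n cosθ)], and p₂ = (1 + n² + 2n cosθ)/(2(1 + n cosθ)). Let f : ℝ² → ℝ be symmetric and concave on Ω₂ with f(1,0) = 0, and assume f(cos²(θ₄/2), sin²(θ₄/2)) > 0. Then the average coherences of the qubit decompositions D^(m₂), D^(s), D^(M) satisfy the strict order relation p₂ · f(cos²(θ₄/2), sin²(θ₄/2)) < f(cos²(θ/2), sin²(θ/2)) ≤ f(cos²(θ_o/2), sin²(θ_o/2)), i.e. C̄(D^(m₂)) < C̄(D^(s)) ≤ C̄(D^(M)). (Order relation (9).) -/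
noncomputable section

/-!
Put `g t = f ![1 - t, t]`. By the half-angle formula the three average coherences are
`p₂ * g x₄`, `g ((1 - cos θ) / 2)` and `g ((1 - n cos θ) / 2)`, where
`x₄ = n² sin² θ / (1 + n² + 2 n cos θ)`, and all three arguments lie in `[0, 1/2]`.
A concave `g` on `[0, 1]` with `g (1 - t) = g t` is nondecreasing on `[0, 1/2]`, which gives the
second inequality. For the first, `g 0 = 0` makes `g t / t` nonincreasing, and `p₂ < 1` together
with `p₂ x₄ < (1 - cos θ) / 2` then forces `p₂ g x₄ < g ((1 - cos θ) / 2)` whether `x₄` lies below or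
above `(1 - cos θ) / 2`.
-/

open Set Real

namespace ConcaveOn

variable {g : ℝ → ℝ}

theorem monotoneOn_of_apply_one_sub (hg : ConcaveOn ℝ (Icc 0 1) g)
    (hsymm : ∀ t, g (1 - t) = g t) : MonotoneOn g (Icc 0 (1 / 2)) := by
  rintro a ⟨ha0, ha⟩ b ⟨-, hb⟩ hab
  have := hg.min_le_of_mem_Icc (x := a) (y := 1 - a) ⟨ha0, by linarith⟩
    ⟨by linarith, by linarith⟩ ⟨hab, by linarith⟩
  rwa [hsymm, min_self] at this

theorem div_mul_le_of_map_zero (hg : ConcaveOn ℝ (Icc 0 1) g) (hg0 : g 0 = 0) {t u : ℝ}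
    (ht : 0 ≤ t) (htu : t ≤ u) (hu : u ≤ 1) (hu0 : 0 < u) : t / u * g u ≤ g t := by
  have := hg.2 (x := u) (y := 0) ⟨hu0.le, hu⟩ ⟨le_rfl, zero_le_one⟩ (div_nonneg ht hu0.le)
    (sub_nonneg.2 (div_le_one_of_le₀ htu hu0.le)) (add_sub_cancel _ _)
  simpa [hg0, div_mul_cancel₀ t hu0.ne'] using this

theorem mul_lt_of_mul_lt (hg : ConcaveOn ℝ (Icc 0 1) g) (hsymm : ∀ t, g (1 - t) = g t)
    (hg0 : g 0 = 0) {p x y : ℝ} (hgx : 0 < g x) (hx : 0 < x) (hx1 : x ≤ 1 / 2)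
    (hy : 0 ≤ y) (hy1 : y ≤ 1 / 2) (hp : p < 1) (hpxy : p * x < y) : p * g x < g y := by
  rcases le_or_gt y x with hyx | hxy
  · calc p * g x < y / x * g x := mul_lt_mul_of_pos_right ((lt_div_iff₀ hx).2 hpxy) hgx
      _ ≤ g y := hg.div_mul_le_of_map_zero hg0 hy hyx (by linarith) hx
  · calc p * g x < g x := (mul_lt_mul_of_pos_right hp hgx).trans_eq (one_mul _)
      _ ≤ g y := hg.monotoneOn_of_apply_one_sub hsymm ⟨hx.le, hx1⟩ ⟨hy, hy1⟩ hxy.le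

end ConcaveOn

theorem SymmetricFn.apply_swap {f : (Fin 2 → ℝ) → ℝ} (hf : SymmetricFn f) (a b : ℝ) :
    f ![b, a] = f ![a, b] := by
  convert hf (Equiv.swap 0 1) ![a, b] using 2
  ext i
  fin_cases i <;> rfl

theorem ConcaveOn.comp_one_sub_vec {f : (Fin 2 → ℝ) → ℝ}
    (hf : ConcaveOn ℝ (stdSimplex ℝ (Fin 2)) f) :
    ConcaveOn ℝ (Icc 0 1) (fun t => f ![1 - t, t]) := by
  have hL : ∀ t : ℝ, AffineMap.lineMap (k := ℝ) ![1, 0] ![0, 1] t = ![1 - t, t] := by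
    intro t; ext i; fin_cases i <;> simp [AffineMap.lineMap_apply_module]
  have := (hf.comp_affineMap (AffineMap.lineMap ![1, 0] ![0, 1])).subset ?_ (convex_Icc 0 1)
  · simpa [Function.comp_def, hL] using this
  · rintro t ⟨h0, h1⟩
    simp only [mem_preimage, hL]
    refine ⟨fun i => ?_, by simp⟩
    fin_cases i <;> simpa

theorem vec_cos_sq_sin_sq_half {x s : ℝ} (h : cos x = 1 - 2 * s) :
    ![cos (x / 2) ^ 2, sin (x / 2) ^ 2] = ![1 - s, s] := by
  have hs : sin (x / 2) ^ 2 = s := by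
    rw [← mul_div_cancel₀ x two_ne_zero, cos_two_mul_eq_one_sub] at h
    linarith
  rw [cos_sq', hs]

section QubitParameters

variable {n θ : ℝ}

theorem sq_mul_sin_sq_div_le_half (hn0 : 0 ≤ n) (hn1 : n ≤ 1) (hc : 0 ≤ cos θ) :
    n ^ 2 * sin θ ^ 2 / (1 + n ^ 2 + 2 * n * cos θ) ≤ 1 / 2 := by
  rw [div_le_iff₀ (by positivity)]
  nlinarith [sin_sq_le_one θ, mul_nonneg hn0 hc]

theorem cos_arccos_div_eq_one_sub_two_mul (hn0 : 0 ≤ n) (hn1 : n ≤ 1) (hc : 0 ≤ cos θ) :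
    cos (arccos ((1 + 2 * n * cos θ + n ^ 2 * cos (2 * θ)) / (1 + n ^ 2 + 2 * n * cos θ))) =
      1 - 2 * (n ^ 2 * sin θ ^ 2 / (1 + n ^ 2 + 2 * n * cos θ)) := by
  have hx : 0 ≤ n ^ 2 * sin θ ^ 2 / (1 + n ^ 2 + 2 * n * cos θ) := by positivity
  have hx1 := sq_mul_sin_sq_div_le_half hn0 hn1 hc
  have hD : 1 + n ^ 2 + 2 * n * cos θ ≠ 0 := by positivity
  have hdiv : (1 + 2 * n * cos θ + n ^ 2 * cos (2 * θ)) / (1 + n ^ 2 + 2 * n * cos θ) =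
      1 - 2 * (n ^ 2 * sin θ ^ 2 / (1 + n ^ 2 + 2 * n * cos θ)) := by
    rw [cos_two_mul_eq_one_sub]
    field_simp
    ring
  rw [hdiv, cos_arccos (by linarith) (by linarith)]

theorem div_mul_sq_mul_sin_sq_div_lt (hn0 : 0 ≤ n) (hn1 : n < 1) (hc : 0 ≤ cos θ)
    (hx : 0 < n ^ 2 * sin θ ^ 2 / (1 + n ^ 2 + 2 * n * cos θ)) :
    (1 + n ^ 2 + 2 * n * cos θ) / (2 * (1 + n * cos θ)) *
      (n ^ 2 * sin θ ^ 2 / (1 + n ^ 2 + 2 * n * cos θ)) < (1 - cos θ) / 2 := by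
  have hD : 0 < 1 + n ^ 2 + 2 * n * cos θ := by positivity
  have hs : 0 < sin θ ^ 2 :=
    pos_of_mul_pos_right ((div_pos_iff_of_pos_right hD).1 hx) (sq_nonneg n)
  have hc1 : cos θ < 1 := by nlinarith [cos_sq' θ]
  have hcancel : (1 + n ^ 2 + 2 * n * cos θ) / (2 * (1 + n * cos θ)) *
      (n ^ 2 * sin θ ^ 2 / (1 + n ^ 2 + 2 * n * cos θ)) =
      n ^ 2 * sin θ ^ 2 / (2 * (1 + n * cos θ)) := by
    field_simp
  rw [hcancel, div_lt_iff₀ (by positivity), sin_sq]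
  nlinarith [mul_pos (sub_pos.2 hc1) (mul_pos (sub_pos.2 hn1)
    (by positivity : 0 < 1 + n + n * cos θ))]

end QubitParameters

/-- Order relation (9): for every symmetric concave `f` on the probability simplex
with `f(1,0) = 0` whose value at the coherence vector of `D^(m₂)`'s coherent
component is positive, the average coherences of the qubit decompositions
`D^(m₂)`, `D^(s)`, `D^(M)` satisfy `C̄(D^(m₂)) < C̄(D^(s)) ≤ C̄(D^(M))`. -/
theorem order_relation_Dm2_Ds_DM (n θ : ℝ)
    (hn0 : 0 ≤ n) (hn1 : n < 1) (hθ0 : 0 ≤ θ) (hθ1 : θ ≤ Real.pi / 2)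
    (f : (Fin 2 → ℝ) → ℝ) (hsym : SymmetricFn f)
    (hconc : ConcaveOn ℝ (stdSimplex ℝ (Fin 2)) f)
    (hf10 : f ![1, 0] = 0) :
    let θo := Real.arccos (n * Real.cos θ)
    let θ₄ := Real.arccos ((1 + 2 * n * Real.cos θ + n ^ 2 * Real.cos (2 * θ)) /
      (1 + n ^ 2 + 2 * n * Real.cos θ))
    let p₂ : ℝ := (1 + n ^ 2 + 2 * n * Real.cos θ) / (2 * (1 + n * Real.cos θ))
    0 < f ![Real.cos (θ₄ / 2) ^ 2, Real.sin (θ₄ / 2) ^ 2] →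
    p₂ * f ![Real.cos (θ₄ / 2) ^ 2, Real.sin (θ₄ / 2) ^ 2] <
        f ![Real.cos (θ / 2) ^ 2, Real.sin (θ / 2) ^ 2] ∧
      f ![Real.cos (θ / 2) ^ 2, Real.sin (θ / 2) ^ 2] ≤
        f ![Real.cos (θo / 2) ^ 2, Real.sin (θo / 2) ^ 2] := by
  dsimp only
  intro hpos
  have hc : 0 ≤ cos θ := cos_nonneg_of_mem_Icc ⟨by linarith [pi_pos], hθ1⟩
  have hc1 : cos θ ≤ 1 := cos_le_one θ
  have hnc0 : 0 ≤ n * cos θ := mul_nonneg hn0 hc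
  have hnc : n * cos θ ≤ cos θ := mul_le_of_le_one_left hc hn1.le
  have hθo : cos (arccos (n * cos θ)) = 1 - 2 * ((1 - n * cos θ) / 2) := by
    rw [cos_arccos (by linarith) (by linarith)]
    ring
  rw [vec_cos_sq_sin_sq_half (cos_arccos_div_eq_one_sub_two_mul hn0 hn1.le hc)] at hpos ⊢
  rw [vec_cos_sq_sin_sq_half (s := (1 - cos θ) / 2) (by ring), vec_cos_sq_sin_sq_half hθo]
  set X := n ^ 2 * sin θ ^ 2 / (1 + n ^ 2 + 2 * n * cos θ)
  have hX1 : X ≤ 1 / 2 := sq_mul_sin_sq_div_le_half hn0 hn1.le hc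
  have hXpos : 0 < X := (by positivity : 0 ≤ X).lt_of_ne fun h => by simp [← h, hf10] at hpos
  have hp₂ : (1 + n ^ 2 + 2 * n * cos θ) / (2 * (1 + n * cos θ)) < 1 := by
    rw [div_lt_one (by positivity)]
    nlinarith
  have hg := hconc.comp_one_sub_vec
  have hsymm (t : ℝ) : f ![1 - (1 - t), 1 - t] = f ![1 - t, t] := by
    rw [sub_sub_cancel, hsym.apply_swap]
  have hg0 : f ![1 - 0, 0] = 0 := by simpa using hf10
  exact ⟨hg.mul_lt_of_mul_lt hsymm hg0 hpos hXpos hX1 (by linarith) (by linarith) hp₂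
      (div_mul_sq_mul_sin_sq_div_lt hn0 hn1 hc hXpos),
    hg.monotoneOn_of_apply_one_sub hsymm ⟨by linarith, by linarith⟩
      ⟨by linarith, by linarith⟩ (by linarith)⟩
end
end
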